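/- arXiv:1803.10920 — 3 statements merged into one kernel-verified Lean document; each statement's English description precedes it below -/
import Mathlib

section
/- Let S be a finite set of steps (x, y) with x a positive integer and y an integer. For n ≥ 0 let f_n be the number of finite lists of steps from S whose x-components sum to n, whose y-prefix sums are all ≥ 0, and whose total y-sum is 0; let g_n be the number of such lists having at least 2 steps whose intermediate prefix y-sums (after 1, …, s−1 of the s steps) are all strictly positive. Set f(t) = Σ f_n tⁿ, g(t) = Σ g_n tⁿ, and r(t) = Σ_{(x,0)∈S} t^x. Then f = 1 + (g + r)·f as an identity in ℤ⟦t⟧ (first-return decomposition of excursions into irreducible pieces). -/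
open PowerSeries

/-- Generating function for excursions with step set `S ⊆ ℤ≥1 × ℤ`: the
coefficient of `t^n` counts lists of steps from `S` whose `x`-components sum to
`n`, whose prefix `y`-sums are all `≥ 0`, and whose total `y`-sum is `0`. -/
noncomputable def excGF (S : Finset (ℕ × ℤ)) : PowerSeries ℤ :=
  PowerSeries.mk fun n =>
    (Nat.card {L : List (ℕ × ℤ) //
      (∀ s ∈ L, s ∈ S) ∧
      (L.map Prod.fst).sum = n ∧
      (∀ i : ℕ, 0 ≤ ((L.map Prod.snd).take i).sum) ∧
      (L.map Prod.snd).sum = 0} : ℤ)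

/-- Generating function for irreducible excursions with step set `S`: the
coefficient of `t^n` counts excursions of length `n` having at least `2` steps
whose intermediate prefix `y`-sums are all strictly positive. -/
noncomputable def irrGF (S : Finset (ℕ × ℤ)) : PowerSeries ℤ :=
  PowerSeries.mk fun n =>
    (Nat.card {L : List (ℕ × ℤ) //
      (∀ s ∈ L, s ∈ S) ∧
      (L.map Prod.fst).sum = n ∧
      (∀ i : ℕ, 0 ≤ ((L.map Prod.snd).take i).sum) ∧
      (L.map Prod.snd).sum = 0 ∧
      2 ≤ L.length ∧
      (∀ i : ℕ, 1 ≤ i → i ≤ L.length - 1 → 0 < ((L.map Prod.snd).take i).sum)} : ℤ)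

/-- The generating function `r(t) = ∑_{(x,0) ∈ S} t^x` for the horizontal steps of `S`. -/
noncomputable def horizGF (S : Finset (ℕ × ℤ)) : PowerSeries ℤ :=
  ∑ s ∈ S.filter (fun s => s.2 = 0), (X : PowerSeries ℤ) ^ s.1

/-! Splitting a nonempty excursion at its first return to height `0` writes it uniquely as a
prime excursion (nonempty, strictly above the axis in between) followed by an excursion, and a
prime excursion is either irreducible or a single horizontal step. Generating functions of
weighted types add over disjoint sums and multiply over products, so this bijection
`Excursion ≃ Unit ⊕ (Irreducible ⊕ Horizontal) × Excursion` gives `f = 1 + (g + r) f`.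
Since every step has positive `x`-length, each weight class is finite. -/

section WeightGF

open Finset

variable {α β : Type*}

-- `Nat.card` is `0` on an infinite fiber, hence the finiteness hypotheses below.
noncomputable def weightGF (w : α → ℕ) : ℤ⟦X⟧ :=
  mk fun n => Nat.card {a // w a = n}

@[simp]
lemma coeff_weightGF (w : α → ℕ) (n : ℕ) : coeff n (weightGF w) = Nat.card {a // w a = n} :=
  coeff_mk _ _

lemma weightGF_congr (e : α ≃ β) {wa : α → ℕ} {wb : β → ℕ} (h : ∀ a, wb (e a) = wa a) :
    weightGF wa = weightGF wb := by
  ext n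
  simp only [coeff_weightGF]
  exact congrArg _ (Nat.card_congr (e.subtypeEquiv fun a => by rw [h]))

lemma weightGF_eq_sum [Fintype α] (w : α → ℕ) : weightGF w = ∑ a, X ^ w a := by
  ext n
  simp [coeff_X_pow, Finset.sum_boole, Nat.card_eq_fintype_card, Fintype.card_subtype, eq_comm]

lemma weightGF_sumElim (wa : α → ℕ) (wb : β → ℕ) (ha : ∀ n, Finite {a // wa a = n})
    (hb : ∀ n, Finite {b // wb b = n}) :
    weightGF (Sum.elim wa wb) = weightGF wa + weightGF wb := by
  ext n
  simp only [coeff_weightGF, map_add, Nat.card_congr Equiv.subtypeSum, Nat.card_sum,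
    Sum.elim_inl, Sum.elim_inr]
  push_cast
  rfl

lemma weightGF_unit : weightGF (fun _ : Unit => 0) = 1 := by
  simp [weightGF_eq_sum]

def fiberProdEquiv (wa : α → ℕ) (wb : β → ℕ) (n : ℕ) :
    {p : α × β // wa p.1 + wb p.2 = n} ≃
      Σ ij : antidiagonal n, {a // wa a = ij.1.1} × {b // wb b = ij.1.2} where
  toFun p := ⟨⟨(wa p.1.1, wb p.1.2), mem_antidiagonal.2 p.2⟩, ⟨p.1.1, rfl⟩, ⟨p.1.2, rfl⟩⟩
  invFun q := ⟨(q.2.1, q.2.2), by rw [q.2.1.2, q.2.2.2]; exact mem_antidiagonal.1 q.1.2⟩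
  left_inv p := rfl
  right_inv := by
    rintro ⟨⟨⟨i, j⟩, h⟩, ⟨a, ha⟩, ⟨b, hb⟩⟩
    simp only at ha hb
    subst ha hb
    rfl

lemma finite_fiber_prod {wa : α → ℕ} {wb : β → ℕ} (ha : ∀ n, Finite {a // wa a = n})
    (hb : ∀ n, Finite {b // wb b = n}) (n : ℕ) :
    Finite {p : α × β // wa p.1 + wb p.2 = n} :=
  Finite.of_equiv _ (fiberProdEquiv wa wb n).symm

lemma weightGF_prod (wa : α → ℕ) (wb : β → ℕ) (ha : ∀ n, Finite {a // wa a = n})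
    (hb : ∀ n, Finite {b // wb b = n}) :
    weightGF (fun p : α × β => wa p.1 + wb p.2) = weightGF wa * weightGF wb := by
  ext n
  rw [coeff_mul, coeff_weightGF, Nat.card_congr (fiberProdEquiv wa wb n), Nat.card_sigma,
    ← Finset.sum_coe_sort (antidiagonal n)]
  simp [Nat.card_prod]

end WeightGF

lemma List.finite_setOf_forall_mem_length_le {α : Type*} (S : Finset α) (n : ℕ) :
    {L : List α | (∀ a ∈ L, a ∈ S) ∧ L.length ≤ n}.Finite :=
  ((List.finite_length_le S n).image (List.map Subtype.val)).subset fun L ⟨hS, hn⟩ =>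
    ⟨L.attachWith _ hS, by simpa using hn, by simp⟩

section Excursions

variable {S : Finset (ℕ × ℤ)} {L A B A' B' : List (ℕ × ℤ)} {i j : ℕ}

def height (L : List (ℕ × ℤ)) (i : ℕ) : ℤ := ((L.map Prod.snd).take i).sum

def xLength (L : List (ℕ × ℤ)) : ℕ := (L.map Prod.fst).sum

@[simp]
lemma height_zero : height L 0 = 0 := rfl

lemma height_of_length_le (h : L.length ≤ i) : height L i = (L.map Prod.snd).sum := by
  rw [height, List.take_of_length_le (by simpa using h)]

lemma height_append : height (A ++ B) i = height A i + height B (i - A.length) := by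
  rw [height, List.map_append, List.take_append, List.sum_append, List.length_map]; rfl

lemma height_append_of_le (h : i ≤ A.length) : height (A ++ B) i = height A i := by
  rw [height_append, Nat.sub_eq_zero_of_le h, height_zero, add_zero]

lemma height_take : height (L.take j) i = height L (min i j) := by
  rw [height, List.map_take, List.take_take]; rfl

lemma height_add : height L (j + i) = height L j + height (L.drop j) i := by
  rw [height, List.take_add, List.sum_append, ← List.map_drop]; rfl

lemma xLength_append : xLength (A ++ B) = xLength A + xLength B := by
  simp [xLength]

lemma length_le_xLength (hS : ∀ s ∈ S, 0 < s.1) (hL : ∀ s ∈ L, s ∈ S) :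
    L.length ≤ xLength L := by
  simpa [xLength] using List.length_le_sum_of_one_le (L.map Prod.fst) (by
    simp only [List.mem_map]
    rintro _ ⟨s, hs, rfl⟩
    exact hS s (hL s hs))

structure IsExcursion (S : Finset (ℕ × ℤ)) (L : List (ℕ × ℤ)) : Prop where
  mem : ∀ s ∈ L, s ∈ S
  height_nonneg : ∀ i, 0 ≤ height L i
  sum_snd : (L.map Prod.snd).sum = 0

structure IsPrimeExcursion (S : Finset (ℕ × ℤ)) (L : List (ℕ × ℤ)) : Prop
    extends IsExcursion S L where
  ne_nil : L ≠ []
  height_pos : ∀ i, 0 < i → i < L.length → 0 < height L i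

lemma IsExcursion.nil : IsExcursion S [] := ⟨by simp, fun i => by simp [height], rfl⟩

lemma IsExcursion.height_of_length_le (hL : IsExcursion S L) (h : L.length ≤ i) :
    height L i = 0 := by
  rw [_root_.height_of_length_le h, hL.sum_snd]

lemma IsExcursion.append (hA : IsExcursion S A) (hB : IsExcursion S B) :
    IsExcursion S (A ++ B) where
  mem s hs := (List.mem_append.1 hs).elim (hA.mem s) (hB.mem s)
  height_nonneg i := by
    rw [height_append]; exact add_nonneg (hA.height_nonneg i) (hB.height_nonneg _)
  sum_snd := by simp [hA.sum_snd, hB.sum_snd]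

lemma isPrimeExcursion_singleton {s : ℕ × ℤ} : IsPrimeExcursion S [s] ↔ s ∈ S ∧ s.2 = 0 := by
  refine ⟨fun h => ⟨h.mem s (by simp), by simpa using h.sum_snd⟩, fun ⟨hs, h0⟩ => ?_⟩
  refine ⟨⟨by simpa using hs, fun i => ?_, by simpa using h0⟩, by simp, fun i hi hi' => ?_⟩
  · cases i <;> simp [height, h0]
  · simp at hi'; omega

lemma IsPrimeExcursion.length_le_of_append_eq (hA : IsPrimeExcursion S A)
    (hA' : IsPrimeExcursion S A') (h : A ++ B = A' ++ B') : A.length ≤ A'.length := by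
  by_contra! hlt
  have hzero : height A A'.length = 0 := by
    rw [← height_append_of_le (B := B) hlt.le, h, height_append_of_le le_rfl,
      hA'.height_of_length_le le_rfl]
  exact (hA.height_pos _ (List.length_pos_iff.2 hA'.ne_nil) hlt).ne' hzero

lemma exists_isPrimeExcursion_append (hL : IsExcursion S L) (hne : L ≠ []) :
    ∃ A B, IsPrimeExcursion S A ∧ IsExcursion S B ∧ A ++ B = L := by
  have hlen : 0 < L.length := List.length_pos_iff.2 hne
  have hret : ∃ i, 0 < i ∧ height L i = 0 := ⟨L.length, hlen, hL.height_of_length_le le_rfl⟩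
  set j := Nat.find hret
  obtain ⟨hj, hj0⟩ : 0 < j ∧ height L j = 0 := Nat.find_spec hret
  refine ⟨L.take j, L.drop j, ⟨⟨fun s hs => hL.mem s (List.mem_of_mem_take hs),
    fun i => height_take ▸ hL.height_nonneg _, ?_⟩, ?_, fun i hi hij => ?_⟩,
    ⟨fun s hs => hL.mem s (List.mem_of_mem_drop hs), fun i => ?_, ?_⟩, L.take_append_drop j⟩
  · rwa [List.map_take]
  · simp only [ne_eq, List.take_eq_nil_iff, not_or]
    exact ⟨hj.ne', hne⟩
  · have hij : i < j := by simp at hij; omega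
    rw [height_take, min_eq_left hij.le]
    exact (hL.height_nonneg i).lt_of_ne' fun h => Nat.find_min hret hij ⟨hi, h⟩
  · have := hL.height_nonneg (j + i)
    rwa [height_add, hj0, zero_add] at this
  · have := List.sum_take_add_sum_drop (L.map Prod.snd) j
    rw [List.map_drop]
    unfold height at hj0
    linarith [hL.sum_snd]

def concatExcursions :
    Unit ⊕ ({A // IsPrimeExcursion S A} × {B // IsExcursion S B}) → {L // IsExcursion S L}
  | .inl _ => ⟨[], .nil⟩
  | .inr (A, B) => ⟨A.1 ++ B.1, A.2.append B.2⟩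

lemma concatExcursions_bijective : Function.Bijective (concatExcursions (S := S)) := by
  constructor
  · rintro (_ | ⟨A, B⟩) (_ | ⟨A', B'⟩) h <;> simp only [concatExcursions, Subtype.mk.injEq] at h
    · rfl
    · exact absurd (List.append_eq_nil_iff.1 h.symm).1 A'.2.ne_nil
    · exact absurd (List.append_eq_nil_iff.1 h).1 A.2.ne_nil
    · have hlen := (A.2.length_le_of_append_eq A'.2 h).antisymm
        (A'.2.length_le_of_append_eq A.2 h.symm)
      obtain ⟨hAA', hBB'⟩ := List.append_inj h hlen
      rw [Subtype.ext hAA', Subtype.ext hBB']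
  · rintro ⟨L, hL⟩
    rcases eq_or_ne L [] with rfl | hne
    · exact ⟨.inl (), rfl⟩
    · obtain ⟨A, B, hA, hB, rfl⟩ := exists_isPrimeExcursion_append hL hne
      exact ⟨.inr (⟨A, hA⟩, ⟨B, hB⟩), rfl⟩

def primeOfIrreducibleOrHorizontal :
    {A // IsPrimeExcursion S A ∧ 2 ≤ A.length} ⊕ S.filter (fun s => s.2 = 0) →
      {A // IsPrimeExcursion S A}
  | .inl A => ⟨A.1, A.2.1⟩
  | .inr s => ⟨[s.1], isPrimeExcursion_singleton.2 (Finset.mem_filter.1 s.2)⟩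

lemma primeOfIrreducibleOrHorizontal_bijective :
    Function.Bijective (primeOfIrreducibleOrHorizontal (S := S)) := by
  constructor
  · rintro (A | s) (A' | s') h <;>
      simp only [primeOfIrreducibleOrHorizontal, Subtype.mk.injEq] at h
    · rw [Subtype.ext h]
    · simpa [h] using A.2.2
    · simpa [← h] using A'.2.2
    · rw [Subtype.ext (List.singleton_inj.1 h)]
  · rintro ⟨A, hA⟩
    by_cases hlen : 2 ≤ A.length
    · exact ⟨.inl ⟨A, hA, hlen⟩, rfl⟩
    · obtain ⟨s, rfl⟩ : ∃ s, A = [s] := List.length_eq_one_iff.1 (by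
        have := List.length_pos_iff.2 hA.ne_nil; omega)
      exact ⟨.inr ⟨s, Finset.mem_filter.2 (isPrimeExcursion_singleton.1 hA)⟩, rfl⟩

lemma finite_xLength_fiber (hS : ∀ s ∈ S, 0 < s.1) {P : List (ℕ × ℤ) → Prop}
    (hP : ∀ L, P L → ∀ s ∈ L, s ∈ S) (n : ℕ) : Finite {L : {L // P L} // xLength L = n} := by
  have := (List.finite_setOf_forall_mem_length_le S n).to_subtype
  refine Finite.of_injective (fun L => (⟨L.1.1, hP _ L.1.2,
    (length_le_xLength hS (hP _ L.1.2)).trans L.2.le⟩ :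
      {L : List (ℕ × ℤ) | (∀ a ∈ L, a ∈ S) ∧ L.length ≤ n})) fun L L' h => ?_
  exact Subtype.ext (Subtype.ext (congrArg Subtype.val h :))

noncomputable def walkGF (P : List (ℕ × ℤ) → Prop) : ℤ⟦X⟧ :=
  weightGF fun L : {L // P L} => xLength L

lemma walkGF_isExcursion (hS : ∀ s ∈ S, 0 < s.1) :
    walkGF (IsExcursion S) = 1 + walkGF (IsPrimeExcursion S) * walkGF (IsExcursion S) := by
  have hExc := finite_xLength_fiber hS (P := IsExcursion S) fun _ h => h.mem
  have hPrime := finite_xLength_fiber hS (P := IsPrimeExcursion S) fun _ h => h.mem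
  rw [walkGF, walkGF, ← weightGF_unit, ← weightGF_prod _ _ hPrime hExc,
    ← weightGF_sumElim (fun _ : Unit => 0) _ (fun _ => Finite.of_fintype _)
      (finite_fiber_prod hPrime hExc)]
  refine (weightGF_congr (Equiv.ofBijective _ concatExcursions_bijective) ?_).symm
  rintro (_ | ⟨A, B⟩)
  · rfl
  · exact xLength_append

lemma irrGF_eq_walkGF : irrGF S = walkGF fun A => IsPrimeExcursion S A ∧ 2 ≤ A.length := by
  ext n
  rw [irrGF, coeff_mk, walkGF, coeff_weightGF]
  congr 1
  refine Nat.card_congr ((Equiv.subtypeSubtypeEquivSubtypeInter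
    (fun A => IsPrimeExcursion S A ∧ 2 ≤ A.length) (xLength · = n)).trans
    (Equiv.subtypeEquivRight fun L => ?_)).symm
  constructor
  · rintro ⟨⟨⟨⟨hmem, hnonneg, hsum⟩, -, hpos⟩, hlen⟩, hx⟩
    exact ⟨hmem, hx, hnonneg, hsum, hlen, fun i hi hi' => hpos i hi (by omega)⟩
  · rintro ⟨hmem, hx, hnonneg, hsum, hlen, hpos⟩
    refine ⟨⟨⟨⟨hmem, hnonneg, hsum⟩, List.ne_nil_of_length_pos (by omega), ?_⟩, hlen⟩, hx⟩
    exact fun i hi hi' => hpos i hi (by omega)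

lemma horizGF_eq_weightGF :
    horizGF S = weightGF fun s : S.filter (fun s => s.2 = 0) => s.1.1 := by
  rw [weightGF_eq_sum, horizGF]
  exact (Finset.sum_coe_sort _ fun s : ℕ × ℤ => X ^ s.1).symm

lemma walkGF_isPrimeExcursion (hS : ∀ s ∈ S, 0 < s.1) :
    walkGF (IsPrimeExcursion S) = irrGF S + horizGF S := by
  rw [irrGF_eq_walkGF, horizGF_eq_weightGF, walkGF, walkGF,
    ← weightGF_sumElim _ _ (finite_xLength_fiber hS fun _ h => h.1.mem)
      fun _ => Finite.of_fintype _]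
  refine (weightGF_congr (Equiv.ofBijective _ primeOfIrreducibleOrHorizontal_bijective) ?_).symm
  rintro (A | s)
  · rfl
  · simp [primeOfIrreducibleOrHorizontal, xLength]

lemma excGF_eq_walkGF : excGF S = walkGF (IsExcursion S) := by
  ext n
  rw [excGF, coeff_mk, walkGF, coeff_weightGF]
  congr 1
  refine Nat.card_congr ((Equiv.subtypeSubtypeEquivSubtypeInter (IsExcursion S)
    (xLength · = n)).trans
    (Equiv.subtypeEquivRight fun L => ?_)).symm
  exact ⟨fun ⟨⟨hmem, hnonneg, hsum⟩, hx⟩ => ⟨hmem, hx, hnonneg, hsum⟩,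
    fun ⟨hmem, hx, hnonneg, hsum⟩ => ⟨⟨hmem, hnonneg, hsum⟩, hx⟩⟩

end Excursions

theorem first_return_decomposition (S : Finset (ℕ × ℤ)) (hS : ∀ s ∈ S, 0 < s.1) :
    excGF S = 1 + (irrGF S + horizGF S) * excGF S := by
  rw [excGF_eq_walkGF, ← walkGF_isPrimeExcursion hS]
  exact walkGF_isExcursion hS
end

section
/- Let B(n) be the number of lists of n integers, each belonging to {−2, −1, 1, 2}, whose total sum is 0. Then for every n ≥ 0: 18(2n+1)(5n+8)(n+1)·B(n) + (n+1)(35n² + 91n + 54)·B(n+1) − 2(n+2)(2n+3)(5n+3)·B(n+2) = 0. -/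
/-!
Shifting every step by `2` turns bridges of length `n` into words over `{0, 1, 3, 4}` of total
`2n`, so `B n` is the coefficient of `X ^ (2n)` in `pⁿ`, where `p = 1 + X + X³ + X⁴`.
The Euler operator `f ↦ X f' - k f` kills the coefficient of `X ^ k`, and creative telescoping
provides a polynomial `Uₙ` with `X (Uₙ pⁿ)' - (2n+4) Uₙ pⁿ = c₀ X⁴ pⁿ + c₁ X² pⁿ⁺¹ - c₂ pⁿ⁺²`,
where `c₀, c₁, c₂` are the coefficients of the recurrence. Comparing coefficients of
`X ^ (2n+4)` gives the recurrence.
-/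

/-- `B n` is the number of bridges of length `n` with step set `{-2, -1, 1, 2}`:
lists of `n` integers from that set with total sum `0`. -/
noncomputable def B (n : ℕ) : ℤ :=
  (Nat.card {l : List ℤ //
    l.length = n ∧
    (∀ x ∈ l, x ∈ ({-2, -1, 1, 2} : Set ℤ)) ∧
    l.sum = 0} : ℤ)

open Polynomial Finset

theorem card_lists_eq_card_tuples {α : Type*} [AddCommMonoid α] (S : Set α) (n : ℕ) (m : α) :
    Nat.card {l : List α // l.length = n ∧ (∀ x ∈ l, x ∈ S) ∧ l.sum = m} =
      Nat.card {x : Fin n → α // (∀ i, x i ∈ S) ∧ ∑ i, x i = m} := by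
  refine Nat.card_congr <|
    (Equiv.subtypeSubtypeEquivSubtypeInter (fun l : List α => l.length = n) _).symm.trans <|
      ((Equiv.vectorEquivFin α n).symm.subtypeEquiv fun x => ?_).symm
  have h : ((Equiv.vectorEquivFin α n).symm x).1 = List.ofFn x := List.Vector.toList_ofFn x
  rw [h, List.forall_mem_ofFn_iff, List.sum_ofFn]

theorem coeff_sum_X_pow_pow {R : Type*} [CommSemiring R] (S : Finset ℕ) (n m : ℕ) :
    ((∑ s ∈ S, X ^ s : R[X]) ^ n).coeff m =
      Nat.card {x : Fin n → ℕ // (∀ i, x i ∈ S) ∧ ∑ i, x i = m} := by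
  rw [← Fin.prod_const, prod_univ_sum, finsetSum_coeff]
  simp_rw [prod_pow_eq_pow_sum, coeff_X_pow, sum_boole]
  rw [← Nat.card_eq_finsetCard]
  congr 1
  refine Nat.card_congr (Equiv.subtypeEquivRight fun x => ?_)
  simp [Fintype.mem_piFinset, eq_comm]

theorem mem_bridgeSteps_iff {s : ℤ} :
    s ∈ ({-2, -1, 1, 2} : Set ℤ) ↔ -2 ≤ s ∧ (s + 2).toNat ∈ ({0, 1, 3, 4} : Finset ℕ) := by
  simp only [Set.mem_insert_iff, Set.mem_singleton_iff, Finset.mem_insert, Finset.mem_singleton]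
  omega

def bridgeShiftEquiv (n : ℕ) :
    {x : Fin n → ℤ // (∀ i, x i ∈ ({-2, -1, 1, 2} : Set ℤ)) ∧ ∑ i, x i = 0} ≃
      {y : Fin n → ℕ // (∀ i, y i ∈ ({0, 1, 3, 4} : Finset ℕ)) ∧ ∑ i, y i = 2 * n} where
  toFun x := ⟨fun i => (x.1 i + 2).toNat, fun i => (mem_bridgeSteps_iff.1 (x.2.1 i)).2, by
    have h i : ((x.1 i + 2).toNat : ℤ) = x.1 i + 2 :=
      Int.toNat_of_nonneg (by linarith [(mem_bridgeSteps_iff.1 (x.2.1 i)).1])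
    zify
    simp [h, sum_add_distrib, x.2.2, mul_comm]⟩
  invFun y := ⟨fun i => y.1 i - 2, fun i => mem_bridgeSteps_iff.2 (by simpa using y.2.1 i), by
    have h := y.2.2
    zify at h
    simp [sum_sub_distrib, h, mul_comm]⟩
  left_inv x := by
    ext i
    have := (mem_bridgeSteps_iff.1 (x.2.1 i)).1
    simp only
    omega
  right_inv y := by ext i; simp

theorem coeff_X_mul_derivative_sub_C_mul {R : Type*} [Ring R] (f : R[X]) (k : ℕ) :
    (X * derivative f - C (k : R) * f).coeff k = 0 := by
  cases k with
  | zero => simp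
  | succ k =>
    rw [coeff_sub, coeff_X_mul, coeff_derivative, coeff_C_mul, sub_eq_zero, ← Nat.cast_succ,
      Nat.cast_comm]

theorem mul_derivative_pow_of_mul_derivative {R : Type*} [CommSemiring R] {p U G : R[X]}
    (h : U * derivative p = p * G) (n : ℕ) :
    U * derivative (p ^ n) = C (n : R) * p ^ n * G := by
  cases n with
  | zero => simp
  | succ n =>
    rw [derivative_pow_succ, mul_left_comm, h]
    push_cast
    ring

noncomputable def bridgeStepPoly : ℤ[X] := 1 + X + X ^ 3 + X ^ 4

/-- `Uₙ = (1 + X³) * bridgeCertificate n`; the factor `1 + X³` of `p = (1 + X)(1 + X³)` makes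
`Uₙ (pⁿ)'` a multiple of `pⁿ`. -/
noncomputable def bridgeCertificate (n : ℕ) : ℤ[X] :=
  C ((5 * (n : ℤ) + 3) * (2 * n + 3)) * (1 - X ^ 5)
    + C ((5 * (n : ℤ) + 3) * (5 * n + 8)) * (X - X ^ 4)
    - C (5 * (n : ℤ) + 9) * (X ^ 2 - X ^ 3)

theorem bridgeCertificate_telescoping (n : ℕ) :
    X * derivative ((1 + X ^ 3) * bridgeCertificate n * bridgeStepPoly ^ n)
        - C ((2 * n + 4 : ℕ) : ℤ) * ((1 + X ^ 3) * bridgeCertificate n * bridgeStepPoly ^ n) =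
      C (18 * (2 * (n : ℤ) + 1) * (5 * n + 8) * (n + 1)) * (bridgeStepPoly ^ n * X ^ 4)
        + C (((n : ℤ) + 1) * (35 * n ^ 2 + 91 * n + 54)) * (bridgeStepPoly ^ (n + 1) * X ^ 2)
        - C (2 * ((n : ℤ) + 2) * (2 * n + 3) * (5 * n + 3)) * bridgeStepPoly ^ (n + 2) := by
  have hp : derivative bridgeStepPoly = (1 + X) * (4 * X ^ 2 - X + 1) := by
    simp only [bridgeStepPoly, derivative_add, derivative_one, derivative_X, derivative_X_pow,
      zero_add, Nat.cast_ofNat, eq_intCast, Int.cast_ofNat, Nat.add_one_sub_one]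
    ring
  have hU : (1 + X ^ 3) * bridgeCertificate n * derivative bridgeStepPoly =
      bridgeStepPoly * (bridgeCertificate n * (4 * X ^ 2 - X + 1)) := by
    rw [hp, bridgeStepPoly]
    ring
  rw [derivative_mul, mul_derivative_pow_of_mul_derivative hU]
  simp only [bridgeCertificate, bridgeStepPoly, derivative_mul, derivative_add, derivative_sub,
    derivative_one, derivative_X, derivative_X_pow, derivative_C]
  simp only [map_add, map_mul, map_pow, map_one, map_natCast, map_ofNat, Nat.cast_add,
    Nat.cast_mul, Nat.cast_ofNat]
  ring

theorem bridgeStepPoly_pow_coeff_recurrence (n : ℕ) :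
    18 * (2 * (n : ℤ) + 1) * (5 * n + 8) * (n + 1) * (bridgeStepPoly ^ n).coeff (2 * n)
      + ((n : ℤ) + 1) * (35 * n ^ 2 + 91 * n + 54)
        * (bridgeStepPoly ^ (n + 1)).coeff (2 * (n + 1))
      - 2 * ((n : ℤ) + 2) * (2 * n + 3) * (5 * n + 3)
        * (bridgeStepPoly ^ (n + 2)).coeff (2 * (n + 2)) = 0 := by
  have h := congrArg (coeff · (2 * n + 4)) (bridgeCertificate_telescoping n)
  simp only [coeff_X_mul_derivative_sub_C_mul] at h
  simp only [coeff_add, coeff_sub, coeff_C_mul] at h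
  rw [coeff_mul_X_pow, show 2 * n + 4 = 2 * (n + 1) + 2 by ring, coeff_mul_X_pow,
    show 2 * (n + 1) + 2 = 2 * (n + 2) by ring] at h
  exact h.symm

theorem B_eq_coeff (n : ℕ) : B n = (bridgeStepPoly ^ n).coeff (2 * n) := by
  have hp : bridgeStepPoly = ∑ s ∈ ({0, 1, 3, 4} : Finset ℕ), X ^ s := by
    simp [bridgeStepPoly, add_assoc]
  rw [B, card_lists_eq_card_tuples, Nat.card_congr (bridgeShiftEquiv n), hp, coeff_sum_X_pow_pow]

theorem bridge_recurrence_AZd (n : ℕ) :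
    18 * (2 * (n : ℤ) + 1) * (5 * n + 8) * (n + 1) * B n
      + ((n : ℤ) + 1) * (35 * n ^ 2 + 91 * n + 54) * B (n + 1)
      - 2 * ((n : ℤ) + 2) * (2 * n + 3) * (5 * n + 3) * B (n + 2) = 0 := by
  simp only [B_eq_coeff]
  exact bridgeStepPoly_pow_coeff_recurrence n
end

section
/- Let k ≥ 1 be an integer and let f(t) ∈ ℤ⟦t⟧ be the power series whose coefficient of t^n is the number of lists of n integers, each equal to 1 or −k, all of whose prefix sums are ≥ 0 and whose total sum is 0. Then f = 1 + t^{k+1}·f^{k+1} in ℤ⟦t⟧. -/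
open PowerSeries

/-! Call a path with steps `1`, `-k` and nonnegative prefix sums a meander, and let `M_j` be the
generating function of meanders ending at height `j`. Cutting a meander that ends at height `j + 1`
at its last visit to height `0` shows `M_{j+1} = t M_0 M_j`, hence `M_j = t^j M_0^{j+1}`. Removing
the last step of a nonempty excursion, which must be `-k`, shows `M_0 = 1 + t M_k`. -/

/-- The generating function for nonnegative excursions with step set `{1, -k}`:
the coefficient of `t^n` is the number of lists of `n` integers, each equal to
`1` or `-k`, all of whose prefix sums are `≥ 0`, with total sum `0`. -/
noncomputable def fussGF (k : ℕ) : PowerSeries ℤ :=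
  PowerSeries.mk fun n =>
    (Nat.card {l : List ℤ //
      l.length = n ∧
      (∀ x ∈ l, x = 1 ∨ x = -(k : ℤ)) ∧
      (∀ i : ℕ, 0 ≤ (l.take i).sum) ∧
      l.sum = 0} : ℤ)

open Finset

theorem List.finite_length_eq_and_forall_mem {α : Type*} {s : Set α} (hs : s.Finite)
    (n : ℕ) : {l : List α | l.length = n ∧ ∀ x ∈ l, x ∈ s}.Finite := by
  have := hs.to_subtype
  refine ((List.finite_length_eq s n).image (List.map Subtype.val)).subset ?_
  rintro l ⟨rfl, hl⟩
  exact ⟨l.attach.map fun x => ⟨x.1, hl x.1 x.2⟩, by simp, by simp⟩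

theorem List.forall_sum_take_append_nonneg_iff {M : Type*} [AddMonoid M] [LE M]
    (l₁ l₂ : List M) :
    (∀ i, 0 ≤ ((l₁ ++ l₂).take i).sum) ↔
      (∀ i, 0 ≤ (l₁.take i).sum) ∧ ∀ i, 0 ≤ l₁.sum + (l₂.take i).sum := by
  refine ⟨fun h => ⟨fun i => ?_, fun i => ?_⟩, fun ⟨h₁, h₂⟩ i => ?_⟩
  · rcases le_or_gt i l₁.length with hi | hi
    · simpa [List.take_append_of_le_length hi] using h i
    · simpa [List.take_of_length_le hi.le] using h l₁.length
  · simpa [List.take_length_add_append] using h (l₁.length + i)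
  · rcases le_or_gt i l₁.length with hi | hi
    · simpa [List.take_append_of_le_length hi] using h₁ i
    · simpa [List.take_append, List.take_of_length_le hi.le] using h₂ (i - l₁.length)

theorem List.sum_take_append_one_cons_pos {E c : List ℤ} (hE : E.sum = 0)
    (hc : ∀ i, 0 ≤ (c.take i).sum) {t : ℕ} (ht : E.length < t) :
    0 < ((E ++ 1 :: c).take t).sum := by
  obtain ⟨i, rfl⟩ : ∃ i, t = E.length + (i + 1) := ⟨t - E.length - 1, by omega⟩
  rw [List.take_length_add_append, List.sum_append, hE, List.take_succ_cons, List.sum_cons]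
  linarith [hc i]

theorem List.append_one_cons_inj {E E' c c' : List ℤ} (hE : E.sum = 0) (hE' : E'.sum = 0)
    (hc : ∀ i, 0 ≤ (c.take i).sum) (hc' : ∀ i, 0 ≤ (c'.take i).sum)
    (h : E ++ 1 :: c = E' ++ 1 :: c') : E = E' ∧ c = c' := by
  have h₁ : ¬E.length < E'.length := fun hlt => by
    simpa [h, hE'] using List.sum_take_append_one_cons_pos hE hc hlt
  have h₂ : ¬E'.length < E.length := fun hlt => by
    simpa [← h, hE] using List.sum_take_append_one_cons_pos hE' hc' hlt
  obtain ⟨rfl, hc⟩ := List.append_inj h (by omega)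
  exact ⟨rfl, (List.cons.inj hc).2⟩

def IsMeander (k : ℕ) (j : ℤ) (l : List ℤ) : Prop :=
  (∀ x ∈ l, x = 1 ∨ x = -(k : ℤ)) ∧ (∀ i : ℕ, 0 ≤ (l.take i).sum) ∧ l.sum = j

noncomputable def meanderCount (k : ℕ) (j : ℤ) (n : ℕ) : ℕ :=
  Nat.card {l : List ℤ // l.length = n ∧ IsMeander k j l}

noncomputable def meanderGF (k : ℕ) (j : ℤ) : PowerSeries ℤ :=
  mk fun n => (meanderCount k j n : ℤ)

theorem fussGF_eq_meanderGF (k : ℕ) : fussGF k = meanderGF k 0 := rfl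

section

variable {k : ℕ} {j : ℤ} {l : List ℤ}

instance (n : ℕ) : Finite {l : List ℤ // l.length = n ∧ IsMeander k j l} :=
  Set.Finite.to_subtype <|
    (List.finite_length_eq_and_forall_mem (s := {1, -(k : ℤ)}) (by simp) n).subset
      fun _ ⟨hn, hsteps, _⟩ => ⟨hn, hsteps⟩

theorem isMeander_nil_iff : IsMeander k j [] ↔ j = 0 := by
  simp [IsMeander, eq_comm]

theorem meanderCount_length_zero :
    meanderCount k j 0 = if j = 0 then 1 else 0 := by
  have : {l : List ℤ | l.length = 0 ∧ IsMeander k j l} = if j = 0 then {[]} else ∅ := by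
    split_ifs with hj <;> ext l <;>
      simp +contextual [List.length_eq_zero_iff, isMeander_nil_iff, hj]
  rw [meanderCount, ← Set.coe_ofPred, Nat.card_coe_set_eq, this]
  split_ifs <;> simp

theorem isMeander_append_singleton_iff {x : ℤ} :
    IsMeander k 0 (l ++ [x]) ↔ x = -(k : ℤ) ∧ IsMeander k k l := by
  simp only [IsMeander, List.forall_sum_take_append_nonneg_iff, List.mem_append,
    List.mem_singleton, List.sum_append, List.sum_singleton]
  constructor
  · rintro ⟨hsteps, ⟨hpre, hlast⟩, hsum⟩
    have hl : 0 ≤ l.sum := by simpa using hlast 0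
    obtain rfl : x = -k := (hsteps x (Or.inr rfl)).resolve_left (by omega)
    exact ⟨rfl, fun y hy => hsteps y (Or.inl hy), hpre, by omega⟩
  · rintro ⟨rfl, hsteps, hpre, hsum⟩
    refine ⟨?_, ⟨hpre, fun i => ?_⟩, by omega⟩
    · rintro y (hy | rfl)
      exacts [hsteps y hy, Or.inr rfl]
    · cases i <;> simp [hsum]

theorem meanderCount_zero_succ (k n : ℕ) : meanderCount k 0 (n + 1) = meanderCount k k n := by
  let appendLast : {l : List ℤ // l.length = n ∧ IsMeander k k l} →
      {l : List ℤ // l.length = n + 1 ∧ IsMeander k 0 l} :=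
    fun l => ⟨l.1 ++ [-(k : ℤ)], by simp [l.2.1],
      isMeander_append_singleton_iff.2 ⟨rfl, l.2.2⟩⟩
  have hinj : appendLast.Injective := fun l l' h =>
    Subtype.ext (List.append_cancel_right (congrArg Subtype.val h))
  have hsurj : appendLast.Surjective := by
    rintro ⟨l, hn, hl⟩
    obtain ⟨l, x, rfl⟩ := (List.eq_nil_or_concat l).resolve_left (by rintro rfl; simp at hn)
    simp only [List.concat_eq_append] at hn hl ⊢
    obtain ⟨rfl, hl'⟩ := isMeander_append_singleton_iff.1 hl
    exact ⟨⟨l, by simpa using hn, hl'⟩, rfl⟩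
  exact (Nat.card_eq_of_bijective appendLast ⟨hinj, hsurj⟩).symm

theorem IsMeander.append_one_cons {E c : List ℤ} (hE : IsMeander k 0 E) (hc : IsMeander k j c) :
    IsMeander k (j + 1) (E ++ 1 :: c) := by
  obtain ⟨hEs, hEp, hE0⟩ := hE
  obtain ⟨hcs, hcp, rfl⟩ := hc
  refine ⟨?_, (List.forall_sum_take_append_nonneg_iff _ _).2 ⟨hEp, fun i => ?_⟩, ?_⟩
  · simp only [List.mem_append, List.mem_cons]
    rintro x (hx | rfl | hx)
    exacts [hEs x hx, Or.inl rfl, hcs x hx]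
  · cases i with
    | zero => simp [hE0]
    | succ i =>
      simp only [hE0, zero_add, List.take_succ_cons, List.sum_cons]
      linarith [hcp i]
  · simp [hE0, add_comm]

theorem IsMeander.exists_append_one_cons (hj : 0 ≤ j) (h : IsMeander k (j + 1) l) :
    ∃ E c, l = E ++ 1 :: c ∧ IsMeander k 0 E ∧ IsMeander k j c := by
  obtain ⟨hsteps, hpre, hsum⟩ := h
  set i := Nat.findGreatest (fun t => (l.take t).sum = 0) l.length
  have hi : (l.take i).sum = 0 :=
    Nat.findGreatest_spec (P := fun t => (l.take t).sum = 0) (Nat.zero_le _) (by simp)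
  have hpos : ∀ t, i < t → 0 < (l.take t).sum := fun t ht => by
    rcases le_or_gt t l.length with htl | htl
    · exact lt_of_le_of_ne (hpre t) (Ne.symm (Nat.findGreatest_is_greatest ht htl))
    · rw [List.take_of_length_le htl.le, hsum]
      omega
  have hil : i < l.length := by
    refine lt_of_le_of_ne (Nat.findGreatest_le _) fun hil => ?_
    rw [hil, List.take_length] at hi
    omega
  set E := l.take i
  set c := l.drop (i + 1)
  have hl : l = E ++ l[i] :: c := by rw [← List.drop_eq_getElem_cons hil, List.take_append_drop]
  have hEl : E.length = i := List.length_take_of_le hil.le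
  have hx : l[i] = 1 := by
    refine (hsteps _ (List.getElem_mem hil)).resolve_right fun hx => ?_
    have := hpos (i + 1) (Nat.lt_succ_self i)
    rw [List.sum_take_succ _ _ hil, hi, hx] at this
    omega
  rw [hx] at hl
  refine ⟨E, c, hl, ⟨fun x hx => hsteps x (List.mem_of_mem_take hx),
    fun t => List.take_take .. ▸ hpre _, hi⟩, fun x hx => hsteps x (List.mem_of_mem_drop hx),
    fun t => ?_, ?_⟩
  · have := hpos (i + (t + 1)) (by omega)
    rw [hl, ← hEl, List.take_length_add_append, List.sum_append, hi, List.take_succ_cons,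
      List.sum_cons] at this
    omega
  · rw [hl, List.sum_append, hi, List.sum_cons] at hsum
    omega

theorem meanderCount_add_one_add_one (hj : 0 ≤ j) (n : ℕ) :
    meanderCount k (j + 1) (n + 1) =
      ∑ p ∈ antidiagonal n, meanderCount k 0 p.1 * meanderCount k j p.2 := by
  let glue : (Σ p : antidiagonal n, {E : List ℤ // E.length = p.1.1 ∧ IsMeander k 0 E} ×
      {c : List ℤ // c.length = p.1.2 ∧ IsMeander k j c}) →
      {l : List ℤ // l.length = n + 1 ∧ IsMeander k (j + 1) l} :=
    fun ⟨p, E, c⟩ => ⟨E.1 ++ 1 :: c.1,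
      by simp [E.2.1, c.2.1, ← mem_antidiagonal.1 p.2, add_assoc], E.2.2.append_one_cons c.2.2⟩
  have hinj : glue.Injective := by
    rintro ⟨⟨⟨p₁, p₂⟩, hp⟩, ⟨E, hE₁, hE⟩, ⟨c, hc₂, hc⟩⟩
      ⟨⟨⟨p₁', p₂'⟩, hp'⟩, ⟨E', hE₁', hE'⟩, ⟨c', hc₂', hc'⟩⟩ h
    obtain ⟨rfl, rfl⟩ :=
      List.append_one_cons_inj hE.2.2 hE'.2.2 hc.2.1 hc'.2.1 (congrArg Subtype.val h)
    obtain rfl : p₁ = p₁' := hE₁.symm.trans hE₁'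
    obtain rfl : p₂ = p₂' := hc₂.symm.trans hc₂'
    rfl
  have hsurj : glue.Surjective := by
    rintro ⟨l, hn, hl⟩
    obtain ⟨E, c, rfl, hE, hc⟩ := hl.exists_append_one_cons hj
    refine ⟨⟨⟨(E.length, c.length), ?_⟩, ⟨E, rfl, hE⟩, ⟨c, rfl, hc⟩⟩, rfl⟩
    simp only [List.length_append, List.length_cons] at hn
    exact mem_antidiagonal.2 (by omega)
  rw [meanderCount, ← Nat.card_eq_of_bijective glue ⟨hinj, hsurj⟩, Nat.card_sigma]
  simp only [Nat.card_prod]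
  exact sum_coe_sort (antidiagonal n) fun p => meanderCount k 0 p.1 * meanderCount k j p.2

end

theorem meanderGF_zero (k : ℕ) : meanderGF k 0 = 1 + X * meanderGF k k := by
  ext (_ | n)
  · simp [meanderGF, meanderCount_length_zero]
  · simp [meanderGF, coeff_one, meanderCount_zero_succ]

theorem meanderGF_natCast_add_one (k j : ℕ) :
    meanderGF k (j + 1) = X * (meanderGF k 0 * meanderGF k j) := by
  ext (_ | n)
  · simpa [meanderGF, meanderCount_length_zero] using (by omega : (j : ℤ) + 1 ≠ 0)
  · rw [coeff_succ_X_mul, coeff_mul]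
    simp [meanderGF, meanderCount_add_one_add_one (Int.natCast_nonneg j)]

theorem meanderGF_natCast (k j : ℕ) : meanderGF k j = X ^ j * meanderGF k 0 ^ (j + 1) := by
  induction j with
  | zero => simp
  | succ j ih =>
    rw [Nat.cast_succ, meanderGF_natCast_add_one, ih]
    ring

theorem fuss_equation_general (k : ℕ) :
    fussGF k = 1 + X ^ (k + 1) * fussGF k ^ (k + 1) := by
  rw [fussGF_eq_meanderGF]
  conv_lhs => rw [meanderGF_zero, meanderGF_natCast]
  ring

theorem fuss_equation (k : ℕ) (hk : 1 ≤ k) :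
    fussGF k = 1 + X ^ (k + 1) * fussGF k ^ (k + 1) :=
  fuss_equation_general k
end
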